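/- If y ∈ ℝ and Q(γ̃_M + iy) = 0, then y = 0. That is, γ̃_M is the only zero of Q whose real part equals γ̃_M. -/

import Mathlib

/-!
Write `s = γ + iy` and `a_k = √(k(k+2))`. Since `Q(s) = 0`, the series
`∑ e^{-γ a_k/2} e^{-i y a_k/2}` has sum `1/2`, which by the choice of `γ` is also the sum of
`∑ e^{-γ a_k/2}`. Comparing real parts, `∑ e^{-γ a_k/2} (1 - cos(y a_k/2)) = 0`, a series of
nonnegative terms, so `cos(y a_k/2) = 1` for every `k`. For `k = 1, 2` this puts both `y√3/2`
and `y√8/2` in `2πℤ`, which forces `y = 0` because `√3/√8` is irrational.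
-/

/-- `Q(s) = 1 - 2∑_{k≥1} exp(-s√(k(k+2))/2)`. -/
noncomputable def Qfun (s : ℂ) : ℂ :=
  1 - 2 * ∑' k : ℕ,
    Complex.exp (-(s * (Real.sqrt (((k : ℝ) + 1) * (((k : ℝ) + 1) + 2)) : ℂ) / 2))

open Real

theorem Real.cos_eq_one_of_tsum_mul_cos_eq_tsum {ι : Type*} {w θ : ι → ℝ} (hw : ∀ i, 0 < w i)
    (hs : Summable w) (h : ∑' i, w i * cos (θ i) = ∑' i, w i) (i : ι) : cos (θ i) = 1 := by
  have hcos : Summable fun i => w i * cos (θ i) :=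
    hs.of_norm_bounded fun i => by
      simpa [abs_of_pos (hw i)] using mul_le_of_le_one_right (hw i).le (abs_cos_le_one (θ i))
  have hgap : HasSum (fun i => w i * (1 - cos (θ i))) 0 := by
    simpa [mul_sub, h] using hs.hasSum.sub hcos.hasSum
  have hgap_nonneg : ∀ i, 0 ≤ w i * (1 - cos (θ i)) :=
    fun i => mul_nonneg (hw i).le (sub_nonneg.2 (cos_le_one _))
  have hi := congrFun ((hasSum_zero_iff_of_nonneg hgap_nonneg).1 hgap) i
  simp only [mul_eq_zero, (hw i).ne', false_or, Pi.zero_apply] at hi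
  linarith

theorem Complex.re_tsum_ofReal_mul_exp_mul_I {ι : Type*} {w θ : ι → ℝ} (hs : Summable w) :
    (∑' i, (w i : ℂ) * Complex.exp (θ i * Complex.I)).re = ∑' i, w i * Real.cos (θ i) := by
  have hsc : Summable fun i => (w i : ℂ) * Complex.exp (θ i * Complex.I) :=
    Summable.of_norm (by simpa using hs.abs)
  rw [Complex.re_tsum hsc]
  exact tsum_congr fun i => by rw [Complex.re_ofReal_mul, Complex.exp_ofReal_mul_I_re]

theorem Real.cos_eq_one_of_tsum_ofReal_mul_exp_eq_tsum {ι : Type*} {w θ : ι → ℝ}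
    (hw : ∀ i, 0 < w i) (hs : Summable w)
    (h : ∑' i, (w i : ℂ) * Complex.exp (θ i * Complex.I) = ∑' i, w i) (i : ι) :
    cos (θ i) = 1 := by
  refine cos_eq_one_of_tsum_mul_cos_eq_tsum hw hs ?_ i
  rw [← Complex.re_tsum_ofReal_mul_exp_mul_I hs, h, Complex.ofReal_re]

theorem eq_zero_of_cos_mul_eq_one_of_irrational_div {a b y : ℝ} (hab : Irrational (a / b))
    (ha : cos (a * y) = 1) (hb : cos (b * y) = 1) : y = 0 := by
  by_contra hy
  obtain ⟨m, hm⟩ := (cos_eq_one_iff _).1 ha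
  obtain ⟨n, hn⟩ := (cos_eq_one_iff _).1 hb
  refine hab ⟨m / n, ?_⟩
  -- if `n = 0`, both sides are `0` by the convention `x / 0 = 0`
  rw [← mul_div_mul_right a b hy, ← hm, ← hn, mul_div_mul_right _ _ two_pi_pos.ne']
  norm_cast

theorem irrational_sqrt_three_div_sqrt_eight : Irrational (√3 / √8) := by
  have h : √3 / √8 = √((3 / 8 : ℚ) : ℝ) := by
    push_cast
    rw [sqrt_div' _ (by norm_num)]
  rw [h, irrational_sqrt_ratCast_iff, Rat.isSquare_iff]
  norm_num

theorem stmt_12_general (γ : ℝ)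
    (hγ : ∑' k : ℕ,
        Real.exp (-(γ * Real.sqrt (((k : ℝ) + 1) * (((k : ℝ) + 1) + 2)) / 2)) = 1 / 2)
    (y : ℝ) (hQ : Qfun ((γ : ℂ) + Complex.I * (y : ℂ)) = 0) : y = 0 := by
  set a : ℕ → ℝ := fun k => √(((k : ℝ) + 1) * (((k : ℝ) + 1) + 2))
  have hs : Summable fun k => rexp (-(γ * a k / 2)) := by
    by_contra h
    rw [tsum_eq_zero_of_not_summable h] at hγ
    norm_num at hγ
  have hcos : ∀ k, cos (-(y * a k / 2)) = 1 := by
    refine cos_eq_one_of_tsum_ofReal_mul_exp_eq_tsum (fun k => exp_pos _) hs ?_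
    have hQ' : ∑' k, Complex.exp (-((γ + Complex.I * y) * (a k : ℂ) / 2)) = 1 / 2 := by
      unfold Qfun at hQ
      linear_combination (-1 / 2 : ℂ) * hQ
    rw [hγ, Complex.ofReal_div, Complex.ofReal_one, Complex.ofReal_ofNat, ← hQ']
    refine tsum_congr fun k => ?_
    rw [Complex.ofReal_exp, ← Complex.exp_add]
    push_cast
    congr 1
    ring
  have hcos_half : ∀ k, cos (a k / 2 * y) = 1 := fun k => by
    rw [← hcos k, cos_neg]
    congr 1
    ring
  refine eq_zero_of_cos_mul_eq_one_of_irrational_div ?_ (hcos_half 0) (hcos_half 1)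
  have ha0 : a 0 = √3 := by norm_num [a]
  have ha1 : a 1 = √8 := congrArg sqrt (by norm_num)
  rw [div_div_div_cancel_right₀ two_ne_zero, ha0, ha1]
  exact irrational_sqrt_three_div_sqrt_eight

/-- if `γ̃_M` is the unique positive real with
`∑_{k≥1} exp(-γ̃_M√(k(k+2))/2) = 1/2` and `Q(γ̃_M + iy) = 0` for a real `y`, then `y = 0`;
i.e. `γ̃_M` is the only zero of `Q` with real part `γ̃_M`. -/
theorem stmt_12 (γ : ℝ) (hγpos : 0 < γ)
    (hγ : ∑' k : ℕ,
        Real.exp (-(γ * Real.sqrt (((k : ℝ) + 1) * (((k : ℝ) + 1) + 2)) / 2)) = 1 / 2)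
    (y : ℝ) (hQ : Qfun ((γ : ℂ) + Complex.I * (y : ℂ)) = 0) : y = 0 :=
  stmt_12_general γ hγ y hQ
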